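/- arXiv:1604.01853 — 5 statements merged into one kernel-verified Lean document; each statement's English description precedes it below -/
import Mathlib

section
/- Let g : [a,b] → ℝ be integrable with 0 ≤ g(t) ≤ 1 for all t ∈ [a,b], let f : [a,b] → ℝ be absolutely continuous on [a,b] with derivative f', and set λ = ∫_a^b g(t) dt. Then ∫_a^b f(t) g(t) dt − ∫_{b-λ}^b f(t) dt = −∫_a^{b-λ} (∫_a^x g(t) dt) f'(x) dx − ∫_{b-λ}^b (∫_x^b (1 − g(t)) dt) f'(x) dx. -/
/-!
Write `G x = ∫ t in a..x, g t` and `c = b - λ`. Integrating by parts against the primitives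
`G` and `x ↦ x - c` gives `∫ f g = f b λ - ∫ G f'` over `[a, b]` and
`∫ f = f b λ - ∫ (x - c) f'` over `[c, b]`, so the boundary terms cancel. On `[c, b]` one has
`G x - (x - c) = ∫ t in x..b, (1 - g t)`, while on `[a, c]` only `G` remains.
-/

open MeasureTheory Set

theorem IntervalIntegrable.ae_deriv_integral_eq {E : Type*} [NormedAddCommGroup E]
    [NormedSpace ℝ E] [CompleteSpace E] {φ : ℝ → E} {p q c : ℝ}
    (hφ : IntervalIntegrable φ volume p q) (hc : c ∈ uIcc p q) :
    ∀ᵐ x, x ∈ uIoc p q → deriv (fun x => ∫ t in c..x, φ t) x = φ x := by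
  filter_upwards [hφ.ae_hasDerivAt_integral] with x hx hxI
  exact (hx (uIoc_subset_uIcc hxI) c hc).deriv

theorem integral_primitive_mul {φ ψ : ℝ → ℝ} {p q : ℝ}
    (hφ : IntervalIntegrable φ volume p q) (hψ : IntervalIntegrable ψ volume p q) :
    ∫ x in p..q, (∫ t in p..x, φ t) * ψ x
      = (∫ x in p..q, φ x) * (∫ x in p..q, ψ x)
        - ∫ x in p..q, (∫ t in p..x, ψ t) * φ x := by
  have hΦ := hφ.absolutelyContinuousOnInterval_intervalIntegral left_mem_uIcc
  have hΨ := hψ.absolutelyContinuousOnInterval_intervalIntegral left_mem_uIcc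
  have hderivΨ : ∫ x in p..q, (∫ t in p..x, φ t) * deriv (fun x => ∫ t in p..x, ψ t) x
      = ∫ x in p..q, (∫ t in p..x, φ t) * ψ x := by
    refine intervalIntegral.integral_congr_ae ?_
    filter_upwards [hψ.ae_deriv_integral_eq left_mem_uIcc] with x hx hxI
    rw [hx hxI]
  have hderivΦ : ∫ x in p..q, deriv (fun x => ∫ t in p..x, φ t) x * ∫ t in p..x, ψ t
      = ∫ x in p..q, (∫ t in p..x, ψ t) * φ x := by
    refine intervalIntegral.integral_congr_ae ?_
    filter_upwards [hφ.ae_deriv_integral_eq left_mem_uIcc] with x hx hxI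
    rw [hx hxI, mul_comm]
  simpa [hderivΨ, hderivΦ] using hΦ.integral_mul_deriv_eq_deriv_mul hΨ

/-- `f` is absolutely continuous on `[p, q]` with a.e. derivative `f'`. -/
def IsIndefiniteIntegralOn (f f' : ℝ → ℝ) (p q : ℝ) : Prop :=
  ∀ x ∈ Icc p q, f x = f p + ∫ t in p..x, f' t

namespace IsIndefiniteIntegralOn

variable {f f' : ℝ → ℝ} {p q : ℝ}

theorem of_mem_Icc (hf : IsIndefiniteIntegralOn f f' p q)
    (hf' : IntervalIntegrable f' volume p q) {c : ℝ} (hc : c ∈ Icc p q) :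
    IsIndefiniteIntegralOn f f' c q := by
  intro x hx
  have hx' : x ∈ Icc p q := ⟨hc.1.trans hx.1, hx.2⟩
  have hsub : ∀ y ∈ Icc p q, uIcc p y ⊆ uIcc p q := fun y hy =>
    uIcc_subset_uIcc left_mem_uIcc (uIcc_of_le (hc.1.trans hc.2) ▸ hy)
  rw [hf x hx', hf c hc, ← intervalIntegral.integral_interval_sub_left
    (hf'.mono_set (hsub x hx')) (hf'.mono_set (hsub c hc))]
  ring

theorem integral_mul (hf : IsIndefiniteIntegralOn f f' p q) (hpq : p ≤ q)
    (hf' : IntervalIntegrable f' volume p q) {h : ℝ → ℝ}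
    (hh : IntervalIntegrable h volume p q) :
    ∫ x in p..q, f x * h x
      = f q * (∫ x in p..q, h x) - ∫ x in p..q, (∫ t in p..x, h t) * f' x := by
  have hF := (hf'.absolutelyContinuousOnInterval_intervalIntegral left_mem_uIcc).continuousOn
  have hsplit : ∫ x in p..q, f x * h x
      = ∫ x in p..q, (f p * h x + (∫ t in p..x, f' t) * h x) := by
    refine intervalIntegral.integral_congr fun x hx => ?_
    rw [hf x (uIcc_of_le hpq ▸ hx), add_mul]
  rw [hsplit, intervalIntegral.integral_add (hh.const_mul _) (hh.continuousOn_mul hF),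
    intervalIntegral.integral_const_mul, integral_primitive_mul hf' hh,
    hf q (right_mem_Icc.2 hpq)]
  ring

end IsIndefiniteIntegralOn

theorem sub_integral_mem_Icc {g : ℝ → ℝ} {a b : ℝ} (hab : a ≤ b)
    (hg : IntervalIntegrable g volume a b) (hg01 : ∀ t ∈ Icc a b, 0 ≤ g t ∧ g t ≤ 1) :
    b - ∫ t in a..b, g t ∈ Icc a b := by
  have hnonneg := intervalIntegral.integral_nonneg (μ := volume) hab fun t ht => (hg01 t ht).1
  have hle := intervalIntegral.integral_mono_on hab hg intervalIntegrable_const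
    fun t ht => (hg01 t ht).2
  simp only [intervalIntegral.integral_const, smul_eq_mul, mul_one] at hle
  constructor <;> linarith

theorem integral_one_sub_eq {g : ℝ → ℝ} {a b x : ℝ} (hg : IntervalIntegrable g volume a b)
    (hx : x ∈ uIcc a b) :
    ∫ t in x..b, (1 - g t) = (∫ t in a..x, g t) - (x - (b - ∫ t in a..b, g t)) := by
  have hgx : IntervalIntegrable g volume x b :=
    hg.mono_set (uIcc_subset_uIcc hx right_mem_uIcc)
  rw [intervalIntegral.integral_sub intervalIntegrable_const hgx,
    intervalIntegral.integral_const, smul_eq_mul, mul_one,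
    ← intervalIntegral.integral_add_adjacent_intervals
      (hg.mono_set (uIcc_subset_uIcc left_mem_uIcc hx)) hgx]
  ring

theorem steffensen_identity_two (a b : ℝ) (hab : a < b) (f f' g : ℝ → ℝ)
    (hg : IntervalIntegrable g volume a b)
    (hg01 : ∀ t ∈ Set.Icc a b, 0 ≤ g t ∧ g t ≤ 1)
    (hf' : IntervalIntegrable f' volume a b)
    (hAC : ∀ x ∈ Set.Icc a b, f x = f a + ∫ t in a..x, f' t)
    (lam : ℝ) (hlam : lam = ∫ t in a..b, g t) :
    (∫ t in a..b, f t * g t) - (∫ t in (b - lam)..b, f t)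
      = -(∫ x in a..(b - lam), (∫ t in a..x, g t) * f' x)
          - ∫ x in (b - lam)..b, (∫ t in x..b, (1 - g t)) * f' x := by
  obtain ⟨hac, hcb⟩ : b - lam ∈ Icc a b := hlam ▸ sub_integral_mem_Icc hab.le hg hg01
  set c := b - lam with hc
  have hac' : uIcc a c ⊆ uIcc a b :=
    uIcc_subset_uIcc left_mem_uIcc (uIcc_of_le hab.le ▸ ⟨hac, hcb⟩)
  have hcb' : uIcc c b ⊆ uIcc a b := uIcc_subset_uIcc (hac' right_mem_uIcc) right_mem_uIcc
  have hGf' : IntervalIntegrable (fun x => (∫ t in a..x, g t) * f' x) volume a b :=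
    hf'.continuousOn_mul
      (hg.absolutelyContinuousOnInterval_intervalIntegral left_mem_uIcc).continuousOn
  have hfg := IsIndefiniteIntegralOn.integral_mul hAC hab.le hf' hg
  have hf : ∫ t in c..b, f t = f b * lam - ∫ x in c..b, (x - c) * f' x := by
    simpa [hc] using (IsIndefiniteIntegralOn.of_mem_Icc hAC hf' ⟨hac, hcb⟩).integral_mul hcb
      (hf'.mono_set hcb') (intervalIntegrable_const (c := (1 : ℝ)))
  have hright : ∫ x in c..b, (∫ t in x..b, (1 - g t)) * f' x
      = (∫ x in c..b, (∫ t in a..x, g t) * f' x) - ∫ x in c..b, (x - c) * f' x := by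
    rw [intervalIntegral.integral_congr fun x hx => by
        rw [integral_one_sub_eq hg (hcb' hx), ← hlam, sub_mul],
      intervalIntegral.integral_sub (hGf'.mono_set hcb')
        ((hf'.mono_set hcb').continuousOn_mul (by fun_prop))]
  rw [hfg, hf, hright, ← intervalIntegral.integral_add_adjacent_intervals
    (hGf'.mono_set hac') (hGf'.mono_set hcb'), ← hlam]
  ring
end

section
/- Let f, g : [a,b] → ℝ with g integrable, 0 ≤ g(t) ≤ 1 for all t ∈ [a,b], f of bounded variation on [a,b], f integrable, and f·g integrable on [a,b]. Setting λ = ∫_a^b g(t) dt, one has |∫_a^b f(t) g(t) dt − ∫_{b-λ}^b f(t) dt| ≤ (∫_a^{b-λ} g(t) dt) · V_a^b(f) ≤ (b − a − λ) · V_a^b(f). -/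
open MeasureTheory Set

/-! Put `c = b - λ`, so that `∫_a^b g = b - c`. Then for every constant `k` the difference
`∫_a^b f g - ∫_c^b f` equals `∫_a^c (f - k) g - ∫_c^b (f - k) (1 - g)`. Taking `k = f c`, the
factor `|f - f c|` is bounded by the variation of `f` on `[a, c]`, resp. `[c, b]`, while both
weights `g` and `1 - g` are nonnegative with the same integral `∫_a^c g`; the two variations add
up to `V_a^b(f)`. Finally `∫_a^c g ≤ c - a = b - a - λ` since `g ≤ 1`. -/

theorem BoundedVariationOn.toReal_eVariationOn_Icc_add_Icc {α E : Type*} [LinearOrder α]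
    [PseudoEMetricSpace E] {f : α → E} {a b c : α} (h : BoundedVariationOn f (Icc a c))
    (hab : a ≤ b) (hbc : b ≤ c) :
    (eVariationOn f (Icc a b)).toReal + (eVariationOn f (Icc b c)).toReal =
      (eVariationOn f (Icc a c)).toReal := by
  have hsplit := eVariationOn.Icc_add_Icc f hab hbc (mem_univ b)
  simp only [univ_inter] at hsplit
  rw [← hsplit, ENNReal.toReal_add]
  · exact h.mono (Icc_subset_Icc_right hbc)
  · exact h.mono (Icc_subset_Icc_left hab)

namespace intervalIntegral

theorem abs_integral_mul_le_of_abs_le {μ : Measure ℝ} {h w : ℝ → ℝ}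
    {a b M : ℝ} (hab : a ≤ b) (hw : IntervalIntegrable w μ a b)
    (hw0 : ∀ t ∈ Icc a b, 0 ≤ w t) (hh : ∀ t ∈ Icc a b, |h t| ≤ M) :
    |∫ t in a..b, h t * w t ∂μ| ≤ M * ∫ t in a..b, w t ∂μ := by
  rw [← Real.norm_eq_abs, ← integral_const_mul M w]
  refine norm_integral_le_of_norm_le hab (ae_of_all _ fun t ht => ?_) (hw.const_mul M)
  have ht' : t ∈ Icc a b := Ioc_subset_Icc_self ht
  rw [Real.norm_eq_abs, abs_mul, abs_of_nonneg (hw0 t ht')]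
  exact mul_le_mul_of_nonneg_right (hh t ht') (hw0 t ht')

theorem integral_mul_sub_integral_eq {f g : ℝ → ℝ} {a b c : ℝ} (k : ℝ)
    (hc : c ∈ uIcc a b) (hf : IntervalIntegrable f volume c b)
    (hg : IntervalIntegrable g volume a b)
    (hfg : IntervalIntegrable (fun t => f t * g t) volume a b) :
    (∫ t in a..b, f t * g t) - ∫ t in c..b, f t =
      (∫ t in a..c, (f t - k) * g t) - (∫ t in c..b, (f t - k) * (1 - g t)) +
        k * ((∫ t in a..b, g t) - (b - c)) := by
  have hac : uIcc a c ⊆ uIcc a b := uIcc_subset_uIcc_left hc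
  have hcb : uIcc c b ⊆ uIcc a b := uIcc_subset_uIcc_right hc
  have hg₁ := hg.mono_set hac
  have hg₂ := hg.mono_set hcb
  have hfg₁ := hfg.mono_set hac
  have hfg₂ := hfg.mono_set hcb
  have e₁ : ∫ t in a..c, (f t - k) * g t =
      (∫ t in a..c, f t * g t) - k * ∫ t in a..c, g t := by
    simp_rw [sub_mul]
    rw [integral_sub hfg₁ (hg₁.const_mul k), integral_const_mul]
  have e₂ : ∫ t in c..b, (f t - k) * (1 - g t) =
      ((∫ t in c..b, f t) - k * (b - c)) -
        ((∫ t in c..b, f t * g t) - k * ∫ t in c..b, g t) := by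
    have : (fun t => (f t - k) * (1 - g t)) = fun t => (f t - k) - (f t * g t - k * g t) := by
      ext t; ring
    rw [this, integral_sub (hf.sub intervalIntegrable_const)
        (hfg₂.sub (hg₂.const_mul k)), integral_sub hf intervalIntegrable_const,
      integral_sub hfg₂ (hg₂.const_mul k), integral_const_mul,
      integral_const, smul_eq_mul, mul_comm]
  rw [e₁, e₂, ← integral_add_adjacent_intervals hfg₁ hfg₂,
    ← integral_add_adjacent_intervals hg₁ hg₂]
  ring

end intervalIntegral

theorem abs_integral_mul_sub_integral_le_of_boundedVariationOn {f g : ℝ → ℝ} {a b c : ℝ}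
    (hac : a ≤ c) (hcb : c ≤ b) (hf_bv : BoundedVariationOn f (Icc a b))
    (hf : IntervalIntegrable f volume c b) (hg : IntervalIntegrable g volume a b)
    (hfg : IntervalIntegrable (fun t => f t * g t) volume a b)
    (hg01 : ∀ t ∈ Icc a b, 0 ≤ g t ∧ g t ≤ 1) (hgc : ∫ t in a..b, g t = b - c) :
    |(∫ t in a..b, f t * g t) - ∫ t in c..b, f t| ≤
      (∫ t in a..c, g t) * (eVariationOn f (Icc a b)).toReal := by
  have hc : c ∈ uIcc a b := uIcc_of_le (hac.trans hcb) ▸ ⟨hac, hcb⟩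
  have hg₁ : IntervalIntegrable g volume a c := hg.mono_set (uIcc_subset_uIcc_left hc)
  have hg₂ : IntervalIntegrable g volume c b := hg.mono_set (uIcc_subset_uIcc_right hc)
  have h_weight : ∫ t in c..b, (1 - g t) = ∫ t in a..c, g t := by
    rw [intervalIntegral.integral_sub intervalIntegrable_const hg₂,
      intervalIntegral.integral_const, smul_eq_mul, mul_one, ← hgc,
      ← intervalIntegral.integral_add_adjacent_intervals hg₁ hg₂]
    ring
  have h_left : |∫ t in a..c, (f t - f c) * g t| ≤
      (eVariationOn f (Icc a c)).toReal * ∫ t in a..c, g t :=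
    intervalIntegral.abs_integral_mul_le_of_abs_le hac hg₁
      (fun t ht => (hg01 t ⟨ht.1, ht.2.trans hcb⟩).1)
      (fun t ht => (hf_bv.mono (Icc_subset_Icc_right hcb)).dist_le ht (right_mem_Icc.2 hac))
  have h_right : |∫ t in c..b, (f t - f c) * (1 - g t)| ≤
      (eVariationOn f (Icc c b)).toReal * ∫ t in a..c, g t := by
    rw [← h_weight]
    exact intervalIntegral.abs_integral_mul_le_of_abs_le hcb (intervalIntegrable_const.sub hg₂)
      (fun t ht => sub_nonneg.2 (hg01 t ⟨hac.trans ht.1, ht.2⟩).2)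
      (fun t ht => (hf_bv.mono (Icc_subset_Icc_left hac)).dist_le ht (left_mem_Icc.2 hcb))
  rw [intervalIntegral.integral_mul_sub_integral_eq (f c) hc hf hg hfg, hgc, sub_self, mul_zero,
    add_zero, ← hf_bv.toReal_eVariationOn_Icc_add_Icc hac hcb]
  calc _ ≤ |∫ t in a..c, (f t - f c) * g t| + |∫ t in c..b, (f t - f c) * (1 - g t)| :=
        abs_sub _ _
    _ ≤ _ := by linarith

theorem steffensen_bounded_variation_two (a b : ℝ) (hab : a < b) (f g : ℝ → ℝ)
    (hg : IntervalIntegrable g volume a b)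
    (hg01 : ∀ t ∈ Set.Icc a b, 0 ≤ g t ∧ g t ≤ 1)
    (hf_bv : BoundedVariationOn f (Set.Icc a b))
    (hf : IntervalIntegrable f volume a b)
    (hfg : IntervalIntegrable (fun t => f t * g t) volume a b)
    (lam : ℝ) (hlam : lam = ∫ t in a..b, g t) :
    |(∫ t in a..b, f t * g t) - ∫ t in (b - lam)..b, f t|
        ≤ (∫ t in a..(b - lam), g t) * (eVariationOn f (Set.Icc a b)).toReal ∧
      (∫ t in a..(b - lam), g t) * (eVariationOn f (Set.Icc a b)).toReal
        ≤ (b - a - lam) * (eVariationOn f (Set.Icc a b)).toReal := by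
  have hlam_nonneg : 0 ≤ lam :=
    hlam ▸ intervalIntegral.integral_nonneg hab.le fun t ht => (hg01 t ht).1
  have hlam_le : lam ≤ b - a := by
    simpa [hlam] using intervalIntegral.integral_mono_on hab.le hg intervalIntegrable_const
      fun t ht => (hg01 t ht).2
  have hac : a ≤ b - lam := by linarith
  have hcb : b - lam ≤ b := by linarith
  have hc : b - lam ∈ uIcc a b := uIcc_of_le hab.le ▸ ⟨hac, hcb⟩
  refine ⟨abs_integral_mul_sub_integral_le_of_boundedVariationOn hac hcb hf_bv
    (hf.mono_set (uIcc_subset_uIcc_right hc)) hg hfg hg01 (by rw [← hlam]; ring),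
    mul_le_mul_of_nonneg_right ?_ ENNReal.toReal_nonneg⟩
  calc ∫ t in a..(b - lam), g t ≤ ∫ t in a..(b - lam), (1 : ℝ) :=
        intervalIntegral.integral_mono_on hac (hg.mono_set (uIcc_subset_uIcc_left hc))
          intervalIntegrable_const fun t ht => (hg01 t ⟨ht.1, ht.2.trans hcb⟩).2
    _ = b - a - lam := by
        rw [intervalIntegral.integral_const, smul_eq_mul, mul_one]
        ring
end

section
/- Let f, g : [a,b] → ℝ with g integrable, 0 ≤ g(t) ≤ 1 for all t ∈ [a,b], f decreasing on [a,b], and f·g integrable on [a,b]. Setting λ = ∫_a^b g(t) dt, one has 0 ≤ ∫_a^{a+λ} f(t) dt − ∫_a^b f(t) g(t) dt ≤ (f(a) − f(b)) · ∫_{a+λ}^b g(t) dt. -/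
/-!
Put `c = a + λ`. Since `∫_a^c 1 = λ = ∫_a^b g`, the weights `1 - g` on `[a, c]` and `g` on
`[c, b]` have the same mass `G = ∫_c^b g`, and
`∫_a^c f - ∫_a^b f g = ∫_a^c f (1 - g) - ∫_c^b f g`.
As `f` is decreasing, the first integral lies between `f c * G` and `f a * G`, the second between
`f b * G` and `f c * G`.
-/

open MeasureTheory Set

section

variable {a b : ℝ} {f w : ℝ → ℝ}

theorem mul_integral_le_integral_mul_le {m M : ℝ} (hab : a ≤ b)
    (hw : IntervalIntegrable w volume a b)
    (hfw : IntervalIntegrable (fun t => f t * w t) volume a b)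
    (hw0 : ∀ t ∈ Icc a b, 0 ≤ w t) (hf : MapsTo f (Icc a b) (Icc m M)) :
    m * ∫ t in a..b, w t ≤ ∫ t in a..b, f t * w t ∧
      ∫ t in a..b, f t * w t ≤ M * ∫ t in a..b, w t := by
  rw [← intervalIntegral.integral_const_mul, ← intervalIntegral.integral_const_mul]
  exact ⟨intervalIntegral.integral_mono_on hab (hw.const_mul m) hfw fun t ht =>
      mul_le_mul_of_nonneg_right (hf ht).1 (hw0 t ht),
    intervalIntegral.integral_mono_on hab hfw (hw.const_mul M) fun t ht =>
      mul_le_mul_of_nonneg_right (hf ht).2 (hw0 t ht)⟩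

theorem AntitoneOn.mul_integral_le_integral_mul_le (hab : a ≤ b) (hf : AntitoneOn f (Icc a b))
    (hw : IntervalIntegrable w volume a b)
    (hfw : IntervalIntegrable (fun t => f t * w t) volume a b)
    (hw0 : ∀ t ∈ Icc a b, 0 ≤ w t) :
    f b * ∫ t in a..b, w t ≤ ∫ t in a..b, f t * w t ∧
      ∫ t in a..b, f t * w t ≤ f a * ∫ t in a..b, w t :=
  _root_.mul_integral_le_integral_mul_le hab hw hfw hw0 hf.mapsTo_Icc

theorem add_integral_mem_Icc (hab : a ≤ b) (hw : IntervalIntegrable w volume a b)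
    (hw01 : ∀ t ∈ Icc a b, 0 ≤ w t ∧ w t ≤ 1) : a + ∫ t in a..b, w t ∈ Icc a b := by
  have hle : ∫ t in a..b, w t ≤ ∫ _ in a..b, (1 : ℝ) :=
    intervalIntegral.integral_mono_on hab hw intervalIntegrable_const fun t ht => (hw01 t ht).2
  rw [intervalIntegral.integral_const, smul_eq_mul, mul_one] at hle
  exact ⟨le_add_of_nonneg_right (intervalIntegral.integral_nonneg hab fun t ht => (hw01 t ht).1),
    by linarith⟩

theorem integral_sub_integral_mul_eq (c : ℝ) {g : ℝ → ℝ}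
    (hf : IntervalIntegrable f volume a c)
    (hfg₁ : IntervalIntegrable (fun t => f t * g t) volume a c)
    (hfg₂ : IntervalIntegrable (fun t => f t * g t) volume c b) :
    (∫ t in a..c, f t) - ∫ t in a..b, f t * g t =
      (∫ t in a..c, f t * (1 - g t)) - ∫ t in c..b, f t * g t := by
  simp only [mul_one_sub]
  rw [← intervalIntegral.integral_add_adjacent_intervals hfg₁ hfg₂,
    intervalIntegral.integral_sub hf hfg₁]
  ring

end

theorem steffensen_decreasing_one (a b : ℝ) (hab : a < b) (f g : ℝ → ℝ)
    (hg : IntervalIntegrable g volume a b)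
    (hg01 : ∀ t ∈ Set.Icc a b, 0 ≤ g t ∧ g t ≤ 1)
    (hf_dec : AntitoneOn f (Set.Icc a b))
    (hfg : IntervalIntegrable (fun t => f t * g t) volume a b)
    (lam : ℝ) (hlam : lam = ∫ t in a..b, g t) :
    0 ≤ (∫ t in a..(a + lam), f t) - ∫ t in a..b, f t * g t ∧
      (∫ t in a..(a + lam), f t) - (∫ t in a..b, f t * g t)
        ≤ (f a - f b) * ∫ t in (a + lam)..b, g t := by
  obtain ⟨hac, hcb⟩ : a + lam ∈ Icc a b := hlam ▸ add_integral_mem_Icc hab.le hg hg01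
  set c := a + lam
  have hf : IntervalIntegrable f volume a b := by
    apply AntitoneOn.intervalIntegrable
    rwa [uIcc_of_le hab.le]
  have hsub₁ : uIcc a c ⊆ uIcc a b :=
    uIcc_subset_uIcc_left (by rw [uIcc_of_le hab.le]; exact ⟨hac, hcb⟩)
  have hsub₂ : uIcc c b ⊆ uIcc a b :=
    uIcc_subset_uIcc_right (by rw [uIcc_of_le hab.le]; exact ⟨hac, hcb⟩)
  have hmass : ∫ t in a..c, (1 - g t) = ∫ t in c..b, g t := by
    rw [intervalIntegral.integral_sub intervalIntegrable_const (hg.mono_set hsub₁),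
      intervalIntegral.integral_const, smul_eq_mul, mul_one]
    linarith [intervalIntegral.integral_add_adjacent_intervals (hg.mono_set hsub₁)
      (hg.mono_set hsub₂)]
  have hhead := (hf_dec.mono (Icc_subset_Icc_right hcb)).mul_integral_le_integral_mul_le hac
    (intervalIntegrable_const.sub (hg.mono_set hsub₁))
    (by simpa only [mul_one_sub] using (hf.sub hfg).mono_set hsub₁)
    fun t ht => sub_nonneg.2 (hg01 t ⟨ht.1, ht.2.trans hcb⟩).2
  have htail := (hf_dec.mono (Icc_subset_Icc_left hac)).mul_integral_le_integral_mul_le hcb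
    (hg.mono_set hsub₂) (hfg.mono_set hsub₂) fun t ht => (hg01 t ⟨hac.trans ht.1, ht.2⟩).1
  rw [hmass] at hhead
  rw [integral_sub_integral_mul_eq c (hf.mono_set hsub₁) (hfg.mono_set hsub₁)
    (hfg.mono_set hsub₂)]
  constructor <;> linarith [hhead.1, hhead.2, htail.1, htail.2]
end

section
/- Let f, g : [a,b] → ℝ with g integrable, 0 ≤ g(t) ≤ 1 for all t ∈ [a,b], f decreasing on [a,b], and f·g integrable on [a,b]. Setting λ = ∫_a^b g(t) dt, one has 0 ≤ ∫_a^b f(t) g(t) dt − ∫_{b-λ}^b f(t) dt ≤ (f(a) − f(b)) · ∫_a^{b-λ} g(t) dt. -/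
/-!
Put `c = b - λ`, so that `∫_c^b (1 - g) = ∫_a^c g`. Then
`∫_a^b f g - ∫_c^b f = ∫_a^c f g - ∫_c^b f (1 - g)`, and both integrals on the right are
integrals of the decreasing `f` against nonnegative weights of the same total mass `∫_a^c g`.
On `[a, c]` the values of `f` lie between `f c` and `f a`, on `[c, b]` between `f b` and `f c`,
which gives the lower bound `0` and the upper bound `(f a - f b) ∫_a^c g`.
-/

open MeasureTheory Set

theorem intervalIntegral.integral_mem_Icc_of_mem_Icc_zero_one {a b : ℝ} {g : ℝ → ℝ}
    (hab : a ≤ b) (hg : IntervalIntegrable g volume a b)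
    (hg01 : ∀ t ∈ Icc a b, g t ∈ Icc (0 : ℝ) 1) :
    ∫ t in a..b, g t ∈ Icc 0 (b - a) := by
  refine ⟨intervalIntegral.integral_nonneg hab fun t ht => (hg01 t ht).1, ?_⟩
  calc ∫ t in a..b, g t ≤ ∫ _ in a..b, (1 : ℝ) :=
        intervalIntegral.integral_mono_on hab hg intervalIntegrable_const fun t ht =>
          (hg01 t ht).2
    _ = b - a := by simp

theorem AntitoneOn.integral_mul_mem_Icc {f h : ℝ → ℝ} {u v : ℝ} (huv : u ≤ v)
    (hf : AntitoneOn f (Icc u v)) (hh : IntervalIntegrable h volume u v)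
    (hfh : IntervalIntegrable (fun t => f t * h t) volume u v)
    (h0 : ∀ t ∈ Icc u v, 0 ≤ h t) :
    ∫ t in u..v, f t * h t ∈ Icc (f v * ∫ t in u..v, h t) (f u * ∫ t in u..v, h t) := by
  have hu : u ∈ Icc u v := left_mem_Icc.2 huv
  have hv : v ∈ Icc u v := right_mem_Icc.2 huv
  rw [← intervalIntegral.integral_const_mul, ← intervalIntegral.integral_const_mul]
  exact ⟨intervalIntegral.integral_mono_on huv (hh.const_mul _) hfh fun t ht =>
      mul_le_mul_of_nonneg_right (hf ht hv ht.2) (h0 t ht),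
    intervalIntegral.integral_mono_on huv hfh (hh.const_mul _) fun t ht =>
      mul_le_mul_of_nonneg_right (hf hu ht ht.1) (h0 t ht)⟩

theorem intervalIntegral.integral_mul_sub_integral_eq_s7 {f g : ℝ → ℝ} {a b c : ℝ}
    (hfg_ac : IntervalIntegrable (fun t => f t * g t) volume a c)
    (hfg_cb : IntervalIntegrable (fun t => f t * g t) volume c b)
    (hf_cb : IntervalIntegrable f volume c b) :
    (∫ t in a..b, f t * g t) - ∫ t in c..b, f t
      = (∫ t in a..c, f t * g t) - ∫ t in c..b, f t * (1 - g t) := by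
  simp only [mul_sub, mul_one, intervalIntegral.integral_sub hf_cb hfg_cb,
    ← intervalIntegral.integral_add_adjacent_intervals hfg_ac hfg_cb]
  ring

theorem intervalIntegral.integral_one_sub_eq_of_eq_sub_integral {g : ℝ → ℝ} {a b c : ℝ}
    (hg_ac : IntervalIntegrable g volume a c) (hg_cb : IntervalIntegrable g volume c b)
    (hc : c = b - ∫ t in a..b, g t) :
    ∫ t in c..b, (1 - g t) = ∫ t in a..c, g t := by
  rw [intervalIntegral.integral_sub intervalIntegrable_const hg_cb,
    intervalIntegral.integral_const, smul_eq_mul, mul_one]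
  have := intervalIntegral.integral_add_adjacent_intervals hg_ac hg_cb
  linarith

theorem steffensen_decreasing_two (a b : ℝ) (hab : a < b) (f g : ℝ → ℝ)
    (hg : IntervalIntegrable g volume a b)
    (hg01 : ∀ t ∈ Set.Icc a b, 0 ≤ g t ∧ g t ≤ 1)
    (hf_dec : AntitoneOn f (Set.Icc a b))
    (hfg : IntervalIntegrable (fun t => f t * g t) volume a b)
    (lam : ℝ) (hlam : lam = ∫ t in a..b, g t) :
    0 ≤ (∫ t in a..b, f t * g t) - ∫ t in (b - lam)..b, f t ∧
      (∫ t in a..b, f t * g t) - (∫ t in (b - lam)..b, f t)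
        ≤ (f a - f b) * ∫ t in a..(b - lam), g t := by
  set c := b - lam with hc
  obtain ⟨hac, hcb⟩ : a ≤ c ∧ c ≤ b := by
    have := intervalIntegral.integral_mem_Icc_of_mem_Icc_zero_one hab.le hg hg01
    constructor <;> linarith [this.1, this.2]
  have hIac : Icc a c ⊆ Icc a b := Icc_subset_Icc_right hcb
  have hIcb : Icc c b ⊆ Icc a b := Icc_subset_Icc_left hac
  have hsub_ac := uIcc_subset_uIcc_left (mem_uIcc_of_le hac hcb)
  have hsub_cb := uIcc_subset_uIcc_right (mem_uIcc_of_le hac hcb)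
  have hg_ac := hg.mono_set hsub_ac
  have hg_cb := hg.mono_set hsub_cb
  have hfg_ac := hfg.mono_set hsub_ac
  have hfg_cb := hfg.mono_set hsub_cb
  have hf_cb : IntervalIntegrable f volume c b :=
    (hf_dec.mono (by rwa [uIcc_of_le hcb])).intervalIntegrable
  have hf1g : IntervalIntegrable (fun t => f t * (1 - g t)) volume c b := by
    simpa only [mul_sub, mul_one] using hf_cb.sub hfg_cb
  obtain ⟨hlo_ac, hhi_ac⟩ := (hf_dec.mono hIac).integral_mul_mem_Icc hac hg_ac hfg_ac
    fun t ht => (hg01 t (hIac ht)).1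
  obtain ⟨hlo_cb, hhi_cb⟩ := (hf_dec.mono hIcb).integral_mul_mem_Icc hcb
    (intervalIntegrable_const.sub hg_cb) hf1g fun t ht => sub_nonneg.2 (hg01 t (hIcb ht)).2
  rw [intervalIntegral.integral_one_sub_eq_of_eq_sub_integral hg_ac hg_cb (hlam ▸ hc)]
    at hlo_cb hhi_cb
  rw [intervalIntegral.integral_mul_sub_integral_eq_s7 hfg_ac hfg_cb hf_cb]
  constructor <;> linarith
end

section
/- Let g : [a,b] → ℝ be integrable with 0 ≤ g(t) ≤ 1 for all t ∈ [a,b], and let f : [a,b] → ℝ be absolutely continuous on [a,b] with derivative f' ∈ L^p[a,b] for some p > 1, and let q satisfy 1/p + 1/q = 1. Setting λ = ∫_a^b g(t) dt, one has |∫_a^b f(t) g(t) dt − ∫_{b-λ}^b f(t) dt| ≤ (‖f'‖_{L^p[a,b]} / (q+1)^{1/q}) · [λ^{(q+1)/q} + (b − a − λ)^{(q+1)/q}]. -/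
/-!
Put `c = b - λ` and `K s = ∫_a^s (g - 𝟙_{(c,∞)})`. Since `∫_a^b g = b - c`, the kernel `K` vanishes
at both endpoints, so integrating by parts against the absolutely continuous `f` gives
`∫_a^b f g - ∫_c^b f = -∫_a^b f' K`. On `[a, c]` the kernel is `∫_a^s g ∈ [0, s - a]`, and on
`[c, b]` it is `(b - s) - ∫_s^b g ∈ [0, b - s]`. Hölder's inequality, together with
`∫_a^c (s - a)^q + ∫_c^b (b - s)^q = ((c - a)^(q+1) + (b - c)^(q+1)) / (q + 1)` and the
subadditivity of `t ↦ t^(1/q)`, gives the bound.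
-/

open MeasureTheory Set Interval

theorem IntervalIntegrable.ae_deriv_integral_eq_s18 {u : ℝ → ℝ} {a b : ℝ}
    (hu : IntervalIntegrable u volume a b) :
    ∀ᵐ x, x ∈ Ι a b → deriv (fun x => ∫ t in a..x, u t) x = u x := by
  filter_upwards [hu.ae_hasDerivAt_integral] with x hx hxab
  exact (hx (uIoc_subset_uIcc hxab) a left_mem_uIcc).deriv

namespace intervalIntegral

theorem integral_primitive_mul {u w : ℝ → ℝ} {a b : ℝ}
    (hu : IntervalIntegrable u volume a b) (hw : IntervalIntegrable w volume a b) :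
    ∫ x in a..b, (∫ t in a..x, u t) * w x
      = (∫ x in a..b, u x) * (∫ x in a..b, w x) - ∫ x in a..b, u x * ∫ t in a..x, w t := by
  have hU := hu.absolutelyContinuousOnInterval_intervalIntegral left_mem_uIcc
  have hW := hw.absolutelyContinuousOnInterval_intervalIntegral left_mem_uIcc
  have ibp := hU.integral_mul_deriv_eq_deriv_mul hW
  simp only [integral_same, zero_mul, sub_zero] at ibp
  have hw' : ∫ x in a..b, (∫ t in a..x, u t) * w x
      = ∫ x in a..b, (∫ t in a..x, u t) * deriv (fun x => ∫ t in a..x, w t) x :=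
    integral_congr_ae <| by
      filter_upwards [hw.ae_deriv_integral_eq_s18] with x hx hxab using by rw [hx hxab]
  have hu' : ∫ x in a..b, u x * ∫ t in a..x, w t
      = ∫ x in a..b, deriv (fun x => ∫ t in a..x, u t) x * ∫ t in a..x, w t :=
    integral_congr_ae <| by
      filter_upwards [hu.ae_deriv_integral_eq_s18] with x hx hxab using by rw [hx hxab]
  rw [hw', hu', ibp]

theorem integral_mul_eq_neg_integral_mul_primitive {f f' w : ℝ → ℝ} {a b : ℝ} (hab : a ≤ b)
    (hf' : IntervalIntegrable f' volume a b) (hf : ∀ x ∈ Icc a b, f x = f a + ∫ t in a..x, f' t)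
    (hw : IntervalIntegrable w volume a b) (hw0 : ∫ x in a..b, w x = 0) :
    ∫ x in a..b, f x * w x = -∫ x in a..b, f' x * ∫ t in a..x, w t := by
  have hF := continuousOn_primitive_interval' hf' left_mem_uIcc
  calc ∫ x in a..b, f x * w x = ∫ x in a..b, (f a * w x + (∫ t in a..x, f' t) * w x) :=
        integral_congr fun x hx => by rw [hf x (uIcc_of_le hab ▸ hx), add_mul]
    _ = f a * (∫ x in a..b, w x) + ∫ x in a..b, (∫ t in a..x, f' t) * w x := by
        rw [integral_add (hw.const_mul _) (hw.continuousOn_mul hF), integral_const_mul]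
    _ = -∫ x in a..b, f' x * ∫ t in a..x, w t := by
        rw [integral_primitive_mul hf' hw, hw0]; ring

theorem integral_indicator_Ioi {φ : ℝ → ℝ} {a b c : ℝ} (hab : a ≤ b) (hac : a ≤ c) :
    ∫ x in a..b, (Ioi c).indicator φ x = ∫ x in Ioc c b, φ x := by
  rw [integral_of_le hab, setIntegral_indicator measurableSet_Ioi, Ioc_inter_Ioi,
    max_eq_right hac]

theorem integral_mem_Icc_of_mem_Icc {g : ℝ → ℝ} {a b : ℝ} (hab : a ≤ b)
    (hg : IntervalIntegrable g volume a b) (hg01 : ∀ t ∈ Icc a b, g t ∈ Icc 0 1) :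
    ∫ t in a..b, g t ∈ Icc 0 (b - a) := by
  refine ⟨integral_nonneg hab fun t ht => (hg01 t ht).1, ?_⟩
  simpa using integral_mono_on hab hg intervalIntegrable_const fun t ht => (hg01 t ht).2

theorem integral_rpow_le_of_le_sub_left_of_le_sub_right {φ : ℝ → ℝ} {a b c q : ℝ}
    (hac : a ≤ c) (hcb : c ≤ b) (hq : 0 ≤ q) (hφ : ContinuousOn φ (Icc a b))
    (hφ0 : ∀ s ∈ Icc a b, 0 ≤ φ s) (hleft : ∀ s ∈ Icc a c, φ s ≤ s - a)
    (hright : ∀ s ∈ Icc c b, φ s ≤ b - s) :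
    ∫ s in a..b, φ s ^ q ≤ ((c - a) ^ (q + 1) + (b - c) ^ (q + 1)) / (q + 1) := by
  have hint : ∀ {x y}, Icc x y ⊆ Icc a b → x ≤ y →
      IntervalIntegrable (fun s => φ s ^ q) volume x y := fun hxy h =>
    ((hφ.mono hxy).rpow_const fun _ _ => Or.inr hq).intervalIntegrable_of_Icc h
  rw [← integral_add_adjacent_intervals (hint (Icc_subset_Icc_right hcb) hac)
    (hint (Icc_subset_Icc_left hac) hcb), add_div]
  gcongr
  · calc ∫ s in a..c, φ s ^ q ≤ ∫ s in a..c, (s - a) ^ q :=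
          integral_mono_on hac (hint (Icc_subset_Icc_right hcb) hac)
            (((continuous_id.sub continuous_const).rpow_const fun _ => Or.inr hq).intervalIntegrable
              _ _) fun s hs =>
            Real.rpow_le_rpow (hφ0 s ⟨hs.1, hs.2.trans hcb⟩) (hleft s hs) hq
      _ = (c - a) ^ (q + 1) / (q + 1) := by
          simp [integral_comp_sub_right (· ^ q) a, integral_rpow (Or.inl (by linarith)),
            Real.zero_rpow (by linarith : q + 1 ≠ 0)]
  · calc ∫ s in c..b, φ s ^ q ≤ ∫ s in c..b, (b - s) ^ q :=
          integral_mono_on hcb (hint (Icc_subset_Icc_left hac) hcb)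
            (((continuous_const.sub continuous_id).rpow_const fun _ => Or.inr hq).intervalIntegrable
              _ _) fun s hs =>
            Real.rpow_le_rpow (hφ0 s ⟨hac.trans hs.1, hs.2⟩) (hright s hs) hq
      _ = (b - c) ^ (q + 1) / (q + 1) := by
          simp [integral_comp_sub_left (· ^ q) b, integral_rpow (Or.inl (by linarith)),
            Real.zero_rpow (by linarith : q + 1 ≠ 0)]

theorem integral_rpow_rpow_one_div_le_of_le_sub_left_of_le_sub_right {φ : ℝ → ℝ} {a b c q : ℝ}
    (hac : a ≤ c) (hcb : c ≤ b) (hq : 1 ≤ q) (hφ : ContinuousOn φ (Icc a b))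
    (hφ0 : ∀ s ∈ Icc a b, 0 ≤ φ s) (hleft : ∀ s ∈ Icc a c, φ s ≤ s - a)
    (hright : ∀ s ∈ Icc c b, φ s ≤ b - s) :
    (∫ s in a..b, φ s ^ q) ^ (1 / q)
      ≤ ((c - a) ^ ((q + 1) / q) + (b - c) ^ ((q + 1) / q)) / (q + 1) ^ (1 / q) := by
  have hca : 0 ≤ c - a := sub_nonneg.2 hac
  have hbc : 0 ≤ b - c := sub_nonneg.2 hcb
  calc (∫ s in a..b, φ s ^ q) ^ (1 / q)
      ≤ (((c - a) ^ (q + 1) + (b - c) ^ (q + 1)) / (q + 1)) ^ (1 / q) :=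
        Real.rpow_le_rpow
          (integral_nonneg (hac.trans hcb) fun s hs => Real.rpow_nonneg (hφ0 s hs) q)
          (integral_rpow_le_of_le_sub_left_of_le_sub_right hac hcb (by linarith) hφ hφ0 hleft
            hright)
          (by positivity)
    _ = ((c - a) ^ (q + 1) + (b - c) ^ (q + 1)) ^ (1 / q) / (q + 1) ^ (1 / q) :=
        Real.div_rpow (by positivity) (by positivity) _
    _ ≤ _ := by
        gcongr
        calc ((c - a) ^ (q + 1) + (b - c) ^ (q + 1)) ^ (1 / q)
            ≤ ((c - a) ^ (q + 1)) ^ (1 / q) + ((b - c) ^ (q + 1)) ^ (1 / q) :=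
              Real.rpow_add_le_add_rpow (by positivity) (by positivity) (by positivity)
                ((div_le_one (by linarith)).2 hq)
          _ = (c - a) ^ ((q + 1) / q) + (b - c) ^ ((q + 1) / q) := by
              rw [← Real.rpow_mul hca, ← Real.rpow_mul hbc, mul_one_div]

end intervalIntegral

open intervalIntegral

theorem abs_intervalIntegral_mul_le_Lp_mul_Lq {u v : ℝ → ℝ} {a b p q : ℝ} (hab : a ≤ b)
    (hpq : p.HolderConjugate q) (hu : IntervalIntegrable u volume a b)
    (hv : IntervalIntegrable v volume a b)
    (hup : IntervalIntegrable (fun x => |u x| ^ p) volume a b)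
    (hvq : IntervalIntegrable (fun x => |v x| ^ q) volume a b) :
    |∫ x in a..b, u x * v x|
      ≤ (∫ x in a..b, |u x| ^ p) ^ (1 / p) * (∫ x in a..b, |v x| ^ q) ^ (1 / q) := by
  have memLp : ∀ {φ : ℝ → ℝ} {r : ℝ}, 0 < r → IntervalIntegrable φ volume a b →
      IntervalIntegrable (fun x => |φ x| ^ r) volume a b →
      MemLp φ (ENNReal.ofReal r) (volume.restrict (Ioc a b)) := fun hr hφ hφr =>
    (integrable_norm_rpow_iff hφ.1.aestronglyMeasurable (by simpa using hr)
      ENNReal.ofReal_ne_top).1 (by simpa [IntegrableOn, ENNReal.toReal_ofReal hr.le] using hφr.1)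
  simp only [integral_of_le hab]
  calc |∫ x in Ioc a b, u x * v x| ≤ ∫ x in Ioc a b, ‖u x‖ * ‖v x‖ := by
        simpa [abs_mul] using MeasureTheory.abs_integral_le_integral_abs (f := fun x => u x * v x)
    _ ≤ _ := by
        simpa using integral_mul_norm_le_Lp_mul_Lq hpq (memLp hpq.pos hu hup)
          (memLp hpq.symm.pos hv hvq)

noncomputable def steffensenKernel (g : ℝ → ℝ) (a c s : ℝ) : ℝ :=
  ∫ t in a..s, (g t - (Ioi c).indicator 1 t)

theorem intervalIntegrable_indicator_Ioi_one (a b c : ℝ) :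
    IntervalIntegrable ((Ioi c).indicator (1 : ℝ → ℝ)) volume a b :=
  ⟨intervalIntegrable_const.1.indicator measurableSet_Ioi,
    intervalIntegrable_const.2.indicator measurableSet_Ioi⟩

theorem steffensenKernel_eq {g : ℝ → ℝ} {a c s : ℝ} (hac : a ≤ c) (has : a ≤ s)
    (hg : IntervalIntegrable g volume a s) :
    steffensenKernel g a c s = (∫ t in a..s, g t) - max (s - c) 0 := by
  rw [steffensenKernel, integral_sub hg (intervalIntegrable_indicator_Ioi_one a s c),
    integral_indicator_Ioi has hac]
  simp

theorem steffensenKernel_mem_Icc_of_le {g : ℝ → ℝ} {a b c s : ℝ}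
    (hg : IntervalIntegrable g volume a b) (hg01 : ∀ t ∈ Icc a b, g t ∈ Icc 0 1)
    (hcb : c ≤ b) (hs : s ∈ Icc a c) :
    steffensenKernel g a c s ∈ Icc 0 (s - a) := by
  have hsb : s ≤ b := hs.2.trans hcb
  have hgas := hg.mono_set (uIcc_subset_uIcc_left (mem_uIcc_of_le hs.1 hsb))
  rw [steffensenKernel_eq (hs.1.trans hs.2) hs.1 hgas, max_eq_right (by linarith [hs.2]),
    sub_zero]
  exact integral_mem_Icc_of_mem_Icc hs.1 hgas fun t ht => hg01 t ⟨ht.1, ht.2.trans hsb⟩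

theorem steffensenKernel_mem_Icc_of_ge {g : ℝ → ℝ} {a b c s : ℝ}
    (hg : IntervalIntegrable g volume a b) (hg01 : ∀ t ∈ Icc a b, g t ∈ Icc 0 1)
    (hgc : ∫ t in a..b, g t = b - c) (hac : a ≤ c) (hs : s ∈ Icc c b) :
    steffensenKernel g a c s ∈ Icc 0 (b - s) := by
  have has : a ≤ s := hac.trans hs.1
  have hgas := hg.mono_set (uIcc_subset_uIcc_left (mem_uIcc_of_le has hs.2))
  have hgsb := hg.mono_set (uIcc_subset_uIcc_right (mem_uIcc_of_le has hs.2))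
  have htail := integral_mem_Icc_of_mem_Icc hs.2 hgsb fun t ht => hg01 t ⟨has.trans ht.1, ht.2⟩
  have hsplit := integral_interval_sub_left hg hgas
  rw [steffensenKernel_eq hac has hgas, max_eq_left (by linarith [hs.1])]
  constructor <;> linarith [htail.1, htail.2]

theorem integral_mul_sub_integral_eq_neg_integral_mul_steffensenKernel {f f' g : ℝ → ℝ}
    {a b c : ℝ} (hac : a ≤ c) (hcb : c ≤ b) (hf' : IntervalIntegrable f' volume a b)
    (hf : ∀ x ∈ Icc a b, f x = f a + ∫ t in a..x, f' t) (hg : IntervalIntegrable g volume a b)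
    (hgc : ∫ t in a..b, g t = b - c) :
    (∫ t in a..b, f t * g t) - ∫ t in c..b, f t
      = -∫ x in a..b, f' x * steffensenKernel g a c x := by
  have hab := hac.trans hcb
  have hind := intervalIntegrable_indicator_Ioi_one a b c
  have hfc : ContinuousOn f (uIcc a b) :=
    (continuousOn_const.add (continuousOn_primitive_interval' hf' left_mem_uIcc)).congr
      fun x hx => hf x (uIcc_of_le hab ▸ hx)
  have hK0 : ∫ x in a..b, (g x - (Ioi c).indicator 1 x) = 0 := by
    have := steffensenKernel_eq (c := c) hac hab hg
    rw [steffensenKernel] at this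
    rw [this, hgc, max_eq_left (by linarith)]
    ring
  have hfind (x : ℝ) : (Ioi c).indicator f x = f x * (Ioi c).indicator 1 x := by
    by_cases hx : x ∈ Ioi c <;> simp [hx]
  calc (∫ t in a..b, f t * g t) - ∫ t in c..b, f t
      = ∫ x in a..b, f x * (g x - (Ioi c).indicator 1 x) := by
        rw [integral_of_le hcb, ← integral_indicator_Ioi hab hac]
        simp only [hfind, mul_sub]
        rw [integral_sub (hg.continuousOn_mul hfc) (hind.continuousOn_mul hfc)]
    _ = _ := integral_mul_eq_neg_integral_mul_primitive hab hf' hf (hg.sub hind) hK0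

theorem steffensen_Lp_two (a b p q : ℝ) (hab : a < b) (hp : 1 < p)
    (hpq : 1 / p + 1 / q = 1) (f f' g : ℝ → ℝ)
    (hg : IntervalIntegrable g volume a b)
    (hg01 : ∀ t ∈ Set.Icc a b, 0 ≤ g t ∧ g t ≤ 1)
    (hf' : IntervalIntegrable f' volume a b)
    (hf'p : IntervalIntegrable (fun x => |f' x| ^ p) volume a b)
    (hAC : ∀ x ∈ Set.Icc a b, f x = f a + ∫ t in a..x, f' t)
    (lam : ℝ) (hlam : lam = ∫ t in a..b, g t) :
    |(∫ t in a..b, f t * g t) - ∫ t in (b - lam)..b, f t|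
      ≤ (∫ x in a..b, |f' x| ^ p) ^ (1 / p) / (q + 1) ^ (1 / q)
          * (lam ^ ((q + 1) / q) + (b - a - lam) ^ ((q + 1) / q)) := by
  have hpq' : p.HolderConjugate q := Real.holderConjugate_iff.2 ⟨hp, by simpa [one_div] using hpq⟩
  obtain ⟨hlam0, hlam_le⟩ : lam ∈ Icc 0 (b - a) :=
    hlam ▸ integral_mem_Icc_of_mem_Icc hab.le hg hg01
  set c := b - lam with hc
  have hac : a ≤ c := by linarith
  have hcb : c ≤ b := by linarith
  have hgc : ∫ t in a..b, g t = b - c := by rw [← hlam]; ring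
  set K := steffensenKernel g a c
  have hK : ContinuousOn K (uIcc a b) := continuousOn_primitive_interval'
    (hg.sub (intervalIntegrable_indicator_Ioi_one a b c)) left_mem_uIcc
  have hK_left (s) (hs : s ∈ Icc a c) : |K s| ≤ s - a := by
    obtain ⟨h0, h1⟩ := steffensenKernel_mem_Icc_of_le hg hg01 hcb hs
    rwa [abs_of_nonneg h0]
  have hK_right (s) (hs : s ∈ Icc c b) : |K s| ≤ b - s := by
    obtain ⟨h0, h1⟩ := steffensenKernel_mem_Icc_of_ge hg hg01 hgc hac hs
    rwa [abs_of_nonneg h0]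
  calc |(∫ t in a..b, f t * g t) - ∫ t in c..b, f t| = |∫ x in a..b, f' x * K x| := by
        rw [integral_mul_sub_integral_eq_neg_integral_mul_steffensenKernel hac hcb hf' hAC hg hgc,
          abs_neg]
    _ ≤ (∫ x in a..b, |f' x| ^ p) ^ (1 / p) * (∫ x in a..b, |K x| ^ q) ^ (1 / q) :=
        abs_intervalIntegral_mul_le_Lp_mul_Lq hab.le hpq' hf' hK.intervalIntegrable hf'p
          (hK.abs.rpow_const fun _ _ => Or.inr hpq'.symm.nonneg).intervalIntegrable
    _ ≤ (∫ x in a..b, |f' x| ^ p) ^ (1 / p)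
          * (((c - a) ^ ((q + 1) / q) + (b - c) ^ ((q + 1) / q)) / (q + 1) ^ (1 / q)) :=
        mul_le_mul_of_nonneg_left
          (integral_rpow_rpow_one_div_le_of_le_sub_left_of_le_sub_right hac hcb
            hpq'.symm.lt.le (uIcc_of_le hab.le ▸ hK).abs (fun _ _ => abs_nonneg _)
            hK_left hK_right)
          (Real.rpow_nonneg (integral_nonneg hab.le fun _ _ => by positivity) _)
    _ = _ := by
        rw [hc, show b - lam - a = b - a - lam by ring, sub_sub_cancel]
        ring
end
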